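/- Let W be a Krein-selfadjoint operator on H, B ∈ L(H) with closed range and C ∈ L(H). Then the following are equivalent: (i) there exists X₀ ∈ L(H) such that (BX₀ − C)^# W (BX₀ − C) ≤ (BX − C)^# W (BX − C) in the Krein order for every X ∈ L(H); (ii) range(B) is W-nonnegative and range(C) ⊆ range(B) + W⁻¹(range(B)^[⊥]); (iii) range(B) is W-nonnegative and the normal equation B^# W (BX − C) = 0 admits a solution X ∈ L(H). Moreover, if range(B) is W-nonnegative, then X₀ ∈ L(H) satisfies (BX₀ − C)^# W (BX₀ − C) ≤ (BX − C)^# W (BX − C) for every X ∈ L(H) if and only if B^# W (BX₀ − C) = 0. -/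

import Mathlib

open ContinuousLinearMap
open scoped InnerProductSpace

/-!
Put `A = J W`; it is selfadjoint because `W` is Krein-selfadjoint. As `J² = 1`, the Krein
inequality `M^# W M ≤ N^# W N` says that `N* A N - M* A M` is a positive operator, and
`B^# W N = J B* A N` vanishes iff `B* A N` does. For `X = X₀ + D` the quadratic form of
`(BX - C)* A (BX - C) - (BX₀ - C)* A (BX₀ - C)` is
`2 re⟪A (BX₀ - C) x, B D x⟫ + re⟪A B D x, B D x⟫`. If `B* A (BX₀ - C) = 0` and `A` is nonnegative
on `range B` it is nonnegative; conversely, taking `D = t • 1` with `t ∈ ℂ` forces the cross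
term to vanish and `A` to be nonnegative on `range B`.

A pointwise decomposition `C x = B u + v` with `B* A v = 0` says `range (B* A C) ⊆ range (B* A B)`,
and Douglas' factorization (the closed graph theorem, applied to the restriction of `B* A B` to
the orthogonal complement of its kernel) turns it into a bounded solution of `B* A B X = B* A C`.
-/

/-- The Krein adjoint `T^# = J ∘ T* ∘ J`. -/
noncomputable def kadj {H : Type*} [NormedAddCommGroup H] [InnerProductSpace ℂ H]
    [CompleteSpace H] (J T : H →L[ℂ] H) : H →L[ℂ] H := J ∘L adjoint T ∘L J

/-- The Krein order: `S ≤ T` iff `J ∘ (T - S)` is a positive operator. -/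
def kLE {H : Type*} [NormedAddCommGroup H] [InnerProductSpace ℂ H]
    [CompleteSpace H] (J S T : H →L[ℂ] H) : Prop := (J ∘L (T - S)).IsPositive

namespace ContinuousLinearMap

section Factorization

variable {𝕜 E F G : Type*} [NontriviallyNormedField 𝕜]
  [NormedAddCommGroup E] [NormedSpace 𝕜 E] [CompleteSpace E]
  [NormedAddCommGroup F] [NormedSpace 𝕜 F]
  [NormedAddCommGroup G] [NormedSpace 𝕜 G] [CompleteSpace G]

theorem exists_comp_eq_of_injective_of_range_subset {T : E →L[𝕜] F} (hT : Function.Injective T)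
    {D : G →L[𝕜] F} (h : Set.range D ⊆ Set.range T) :
    ∃ X : G →L[𝕜] E, T ∘L X = D := by
  let e := LinearEquiv.ofInjective (T : E →ₗ[𝕜] F) hT
  let D' := (D : G →ₗ[𝕜] F).codRestrict (LinearMap.range (T : E →ₗ[𝕜] F)) fun x => h ⟨x, rfl⟩
  let X : G →ₗ[𝕜] E := e.symm.toLinearMap ∘ₗ D'
  have hTX : ∀ x, T (X x) = D x := fun x => congrArg Subtype.val (e.apply_symm_apply (D' x))
  refine ⟨⟨X, X.continuous_of_seq_closed_graph fun u x y hu hXu => hT ?_⟩, ext hTX⟩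
  refine tendsto_nhds_unique ((T.continuous.tendsto y).comp hXu) ?_
  simpa [Function.comp_def, hTX] using (D.continuous.tendsto x).comp hu

end Factorization

section DouglasFactorization

variable {𝕜 E F G : Type*} [RCLike 𝕜]
  [NormedAddCommGroup E] [InnerProductSpace 𝕜 E] [CompleteSpace E]
  [NormedAddCommGroup F] [NormedSpace 𝕜 F]
  [NormedAddCommGroup G] [NormedSpace 𝕜 G] [CompleteSpace G]

theorem exists_comp_eq_of_range_subset {T : E →L[𝕜] F} {D : G →L[𝕜] F}
    (h : Set.range D ⊆ Set.range T) : ∃ X : G →L[𝕜] E, T ∘L X = D := by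
  set K := T.ker
  have hinj : Function.Injective (T ∘L Kᗮ.subtypeL) := by
    refine (injective_iff_map_eq_zero _).2 ?_
    rintro ⟨x, hx⟩ hTx
    simpa using K.orthogonal_disjoint.le_bot ⟨LinearMap.mem_ker.2 hTx, hx⟩
  have hrange : Set.range T ⊆ Set.range (T ∘L Kᗮ.subtypeL) := by
    rintro _ ⟨x, rfl⟩
    obtain ⟨a, ha, b, hb, rfl⟩ := Submodule.mem_sup.1
      (K.sup_orthogonal_of_hasOrthogonalProjection ▸ Submodule.mem_top : x ∈ K ⊔ Kᗮ)
    have hTa : T a = 0 := ha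
    exact ⟨⟨b, hb⟩, by simp [hTa]⟩
  obtain ⟨X, hX⟩ := exists_comp_eq_of_injective_of_range_subset hinj (h.trans hrange)
  exact ⟨Kᗮ.subtypeL ∘L X, by rw [← hX]; rfl⟩

end DouglasFactorization

end ContinuousLinearMap

theorem Complex.eq_zero_of_forall_two_mul_re_add_normSq_mul_nonneg {c : ℂ} {r : ℝ}
    (h : ∀ t : ℂ, 0 ≤ 2 * (t * c).re + Complex.normSq t * r) : c = 0 := by
  -- along `t = s * conj c` this is a real quadratic in `s` without constant term
  have hquad : ∀ s : ℝ, 0 ≤ (Complex.normSq c * r) * (s * s) + 2 * Complex.normSq c * s + 0 := by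
    intro s
    have := h (s * (starRingEnd ℂ) c)
    rw [mul_assoc, ← Complex.normSq_eq_conj_mul_self, Complex.normSq_mul, Complex.normSq_conj,
      Complex.normSq_ofReal] at this
    simp only [← Complex.ofReal_mul, Complex.ofReal_re] at this
    linarith
  have := discrim_le_zero hquad
  rw [discrim] at this
  exact Complex.normSq_eq_zero.1 (by nlinarith [Complex.normSq_nonneg c])

section Residual

variable {𝕜 H : Type*} [RCLike 𝕜] [NormedAddCommGroup H] [InnerProductSpace 𝕜 H]
  [CompleteSpace H]

open RCLike in
theorem IsSelfAdjoint.re_inner_apply_add_self {A : H →L[𝕜] H} (hA : IsSelfAdjoint A) (u v : H) :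
    re ⟪A (u + v), u + v⟫_𝕜 = re ⟪A u, u⟫_𝕜 + 2 * re ⟪A u, v⟫_𝕜 + re ⟪A v, v⟫_𝕜 := by
  have hvu : re ⟪A v, u⟫_𝕜 = re ⟪A u, v⟫_𝕜 := by
    rw [← adjoint_inner_right, hA.adjoint_eq, ← inner_conj_symm, conj_re]
  simp only [map_add, inner_add_left, inner_add_right, hvu]
  ring

noncomputable def residualGram (A B C X : H →L[𝕜] H) : H →L[𝕜] H :=
  adjoint (B ∘L X - C) ∘L (A ∘L (B ∘L X - C))

theorem inner_residualGram_apply (A B C X : H →L[𝕜] H) (x : H) :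
    ⟪residualGram A B C X x, x⟫_𝕜 = ⟪A ((B ∘L X - C) x), (B ∘L X - C) x⟫_𝕜 := by
  rw [residualGram, comp_apply, adjoint_inner_left, comp_apply]

theorem isSelfAdjoint_residualGram {A : H →L[𝕜] H} (hA : IsSelfAdjoint A) (B C X : H →L[𝕜] H) :
    IsSelfAdjoint (residualGram A B C X) := by
  rw [isSelfAdjoint_iff', residualGram, adjoint_comp, adjoint_comp, adjoint_adjoint, hA.adjoint_eq,
    comp_assoc]

open RCLike in
theorem re_inner_residualGram_sub_apply {A : H →L[𝕜] H} (hA : IsSelfAdjoint A)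
    (B C X₀ X : H →L[𝕜] H) (x : H) :
    re ⟪(residualGram A B C X - residualGram A B C X₀) x, x⟫_𝕜 =
      2 * re ⟪A ((B ∘L X₀ - C) x), B ((X - X₀) x)⟫_𝕜 +
        re ⟪A (B ((X - X₀) x)), B ((X - X₀) x)⟫_𝕜 := by
  have hsplit : (B ∘L X - C) x = (B ∘L X₀ - C) x + B ((X - X₀) x) := by
    simp only [sub_apply, comp_apply, map_sub]
    abel
  rw [sub_apply, inner_sub_left, map_sub, inner_residualGram_apply, inner_residualGram_apply,
    hsplit, hA.re_inner_apply_add_self]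
  ring

theorem exists_adjoint_comp_residual_eq_zero_iff (A B C : H →L[𝕜] H) :
    (∃ X, adjoint B ∘L (A ∘L (B ∘L X - C)) = 0) ↔
      ∀ x, ∃ u v, C x = B u + v ∧ ∀ y, ⟪A v, B y⟫_𝕜 = 0 := by
  have hker : ∀ v, (∀ y, ⟪A v, B y⟫_𝕜 = 0) ↔ adjoint B (A v) = 0 := fun v => by
    simp_rw [← adjoint_inner_left]
    exact ⟨fun h => ext_inner_right 𝕜 (by simpa using h), fun h y => by simp [h]⟩
  constructor
  · rintro ⟨X, hX⟩ x
    refine ⟨X x, C x - B (X x), by abel, (hker _).2 ?_⟩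
    rw [show C x - B (X x) = -((B ∘L X - C) x) by simp, map_neg, map_neg]
    exact neg_eq_zero.2 (DFunLike.congr_fun hX x)
  · intro h
    have hrange : Set.range (adjoint B ∘L (A ∘L C)) ⊆ Set.range (adjoint B ∘L (A ∘L B)) := by
      rintro _ ⟨x, rfl⟩
      obtain ⟨u, v, hCx, hv⟩ := h x
      exact ⟨u, by simp only [comp_apply, hCx, map_add, (hker v).1 hv, add_zero]⟩
    obtain ⟨X, hX⟩ := exists_comp_eq_of_range_subset hrange
    refine ⟨X, ?_⟩
    rw [comp_sub, comp_sub, ← hX]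
    simp only [comp_assoc, sub_self]

end Residual

theorem isPositive_residualGram_sub_iff {H : Type*} [NormedAddCommGroup H]
    [InnerProductSpace ℂ H] [CompleteSpace H] {A : H →L[ℂ] H} (hA : IsSelfAdjoint A)
    (B C X₀ : H →L[ℂ] H) :
    (∀ X, (residualGram A B C X - residualGram A B C X₀).IsPositive) ↔
      (∀ x, 0 ≤ (⟪A (B x), B x⟫_ℂ).re) ∧ adjoint B ∘L (A ∘L (B ∘L X₀ - C)) = 0 := by
  set E := B ∘L X₀ - C
  constructor
  · intro hmin
    have hquad : ∀ x (t : ℂ),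
        0 ≤ 2 * (t * ⟪A (E x), B x⟫_ℂ).re + Complex.normSq t * (⟪A (B x), B x⟫_ℂ).re := by
      intro x t
      have hx := (hmin (X₀ + t • 1)).re_inner_nonneg_left x
      rw [re_inner_residualGram_sub_apply hA, add_sub_cancel_left, smul_apply, one_apply_eq_self,
        map_smul, inner_smul_right, map_smul, inner_smul_left, inner_smul_right, ← mul_assoc,
        ← Complex.normSq_eq_conj_mul_self] at hx
      simpa only [RCLike.re_to_complex, Complex.re_ofReal_mul] using hx
    have horth : ∀ x, ⟪A (E x), B x⟫_ℂ = 0 := fun x =>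
      Complex.eq_zero_of_forall_two_mul_re_add_normSq_mul_nonneg (hquad x)
    refine ⟨fun x => by simpa [horth x] using hquad x 1, coe_injective ?_⟩
    refine (inner_map_self_eq_zero _).1 fun x => ?_
    exact (adjoint_inner_left B x (A (E x))).trans (horth x)
  · rintro ⟨hnonneg, hnormal⟩ X
    refine isPositive_def'.2 ⟨(isSelfAdjoint_residualGram hA B C X).sub
      (isSelfAdjoint_residualGram hA B C X₀), fun x => ?_⟩
    have horth : ⟪A (E x), B ((X - X₀) x)⟫_ℂ = 0 := by
      rw [← adjoint_inner_left, show adjoint B (A (E x)) = 0 from DFunLike.congr_fun hnormal x,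
        inner_zero_left]
    rw [reApplyInnerSelf_apply, re_inner_residualGram_sub_apply hA, horth, map_zero, mul_zero,
      zero_add]
    exact hnonneg ((X - X₀) x)

section Krein

variable {H : Type*} [NormedAddCommGroup H] [InnerProductSpace ℂ H] [CompleteSpace H]
  {J : H →L[ℂ] H}

theorem kadj_comp_comp (J M W N : H →L[ℂ] H) :
    kadj J M ∘L (W ∘L N) = J ∘L (adjoint M ∘L ((J ∘L W) ∘L N)) := by
  simp only [kadj, comp_assoc]

theorem isSelfAdjoint_comp_of_kadj_eq (hJ : IsSelfAdjoint J) (hJ2 : J ∘L J = 1)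
    {W : H →L[ℂ] H} (hW : kadj J W = W) : IsSelfAdjoint (J ∘L W) := by
  rw [isSelfAdjoint_iff', adjoint_comp, hJ.adjoint_eq]
  conv_rhs => rw [← hW, kadj, ← comp_assoc, hJ2]
  rfl

theorem kLE_kadj_comp_iff (hJ2 : J ∘L J = 1) (W B C X₀ X : H →L[ℂ] H) :
    kLE J (kadj J (B ∘L X₀ - C) ∘L (W ∘L (B ∘L X₀ - C)))
        (kadj J (B ∘L X - C) ∘L (W ∘L (B ∘L X - C))) ↔
      (residualGram (J ∘L W) B C X - residualGram (J ∘L W) B C X₀).IsPositive := by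
  rw [kLE, kadj_comp_comp, kadj_comp_comp, ← comp_sub, ← comp_assoc, hJ2]
  rfl

end Krein

theorem stmt7_general {H : Type*} [NormedAddCommGroup H] [InnerProductSpace ℂ H] [CompleteSpace H]
    (J : H →L[ℂ] H) (hJ : IsSelfAdjoint J) (hJ2 : J ∘L J = 1)
    (W : H →L[ℂ] H) (hW : kadj J W = W)
    (B : H →L[ℂ] H) (C : H →L[ℂ] H) :
    ((∃ X₀ : H →L[ℂ] H, ∀ X : H →L[ℂ] H,
        kLE J (kadj J (B ∘L X₀ - C) ∘L (W ∘L (B ∘L X₀ - C)))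
          (kadj J (B ∘L X - C) ∘L (W ∘L (B ∘L X - C)))) ↔
      ((∀ x : H, 0 ≤ (inner ℂ ((J ∘L W) (B x)) (B x) : ℂ).re) ∧
        ∀ x : H, ∃ u v : H, C x = B u + v ∧
          ∀ y : H, (inner ℂ (J (W v)) (B y) : ℂ) = 0)) ∧
    (((∀ x : H, 0 ≤ (inner ℂ ((J ∘L W) (B x)) (B x) : ℂ).re) ∧
        ∀ x : H, ∃ u v : H, C x = B u + v ∧
          ∀ y : H, (inner ℂ (J (W v)) (B y) : ℂ) = 0) ↔
      ((∀ x : H, 0 ≤ (inner ℂ ((J ∘L W) (B x)) (B x) : ℂ).re) ∧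
        ∃ X : H →L[ℂ] H, kadj J B ∘L (W ∘L (B ∘L X - C)) = 0)) ∧
    ((∀ x : H, 0 ≤ (inner ℂ ((J ∘L W) (B x)) (B x) : ℂ).re) →
      ∀ X₀ : H →L[ℂ] H,
        ((∀ X : H →L[ℂ] H,
            kLE J (kadj J (B ∘L X₀ - C) ∘L (W ∘L (B ∘L X₀ - C)))
              (kadj J (B ∘L X - C) ∘L (W ∘L (B ∘L X - C)))) ↔
          kadj J B ∘L (W ∘L (B ∘L X₀ - C)) = 0)) := by
  have hA : IsSelfAdjoint (J ∘L W) := isSelfAdjoint_comp_of_kadj_eq hJ hJ2 hW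
  have hmin : ∀ X₀, (∀ X, kLE J (kadj J (B ∘L X₀ - C) ∘L (W ∘L (B ∘L X₀ - C)))
      (kadj J (B ∘L X - C) ∘L (W ∘L (B ∘L X - C)))) ↔
      (∀ x, 0 ≤ (inner ℂ ((J ∘L W) (B x)) (B x)).re) ∧
        adjoint B ∘L ((J ∘L W) ∘L (B ∘L X₀ - C)) = 0 := fun X₀ =>
    (forall_congr' fun X => kLE_kadj_comp_iff hJ2 W B C X₀ X).trans
      (isPositive_residualGram_sub_iff hA B C X₀)
  have hnormal : ∀ X, kadj J B ∘L (W ∘L (B ∘L X - C)) = 0 ↔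
      adjoint B ∘L ((J ∘L W) ∘L (B ∘L X - C)) = 0 := fun X => by
    rw [kadj_comp_comp]
    exact (⟨J, J, hJ2, hJ2⟩ : (H →L[ℂ] H)ˣ).mul_right_eq_zero
  have hsolv := exists_adjoint_comp_residual_eq_zero_iff (J ∘L W) B C
  simp only [comp_apply] at hsolv
  simp only [hmin, hnormal, hsolv, exists_and_left]
  tauto

/-- characterization of the existence of a `W`-indefinite minimum solution
of `BX − C = 0`, and identification of the minimizers with the solutions of the normal
equation `B^# W (BX − C) = 0`. -/
theorem stmt7 {H : Type*} [NormedAddCommGroup H] [InnerProductSpace ℂ H] [CompleteSpace H]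
    (J : H →L[ℂ] H) (hJ : IsSelfAdjoint J) (hJ2 : J ∘L J = 1)
    (W : H →L[ℂ] H) (hW : kadj J W = W)
    (B : H →L[ℂ] H) (hB : IsClosed (Set.range ⇑B)) (C : H →L[ℂ] H) :
    ((∃ X₀ : H →L[ℂ] H, ∀ X : H →L[ℂ] H,
        kLE J (kadj J (B ∘L X₀ - C) ∘L (W ∘L (B ∘L X₀ - C)))
          (kadj J (B ∘L X - C) ∘L (W ∘L (B ∘L X - C)))) ↔
      ((∀ x : H, 0 ≤ (inner ℂ ((J ∘L W) (B x)) (B x) : ℂ).re) ∧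
        ∀ x : H, ∃ u v : H, C x = B u + v ∧
          ∀ y : H, (inner ℂ (J (W v)) (B y) : ℂ) = 0)) ∧
    (((∀ x : H, 0 ≤ (inner ℂ ((J ∘L W) (B x)) (B x) : ℂ).re) ∧
        ∀ x : H, ∃ u v : H, C x = B u + v ∧
          ∀ y : H, (inner ℂ (J (W v)) (B y) : ℂ) = 0) ↔
      ((∀ x : H, 0 ≤ (inner ℂ ((J ∘L W) (B x)) (B x) : ℂ).re) ∧
        ∃ X : H →L[ℂ] H, kadj J B ∘L (W ∘L (B ∘L X - C)) = 0)) ∧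
    ((∀ x : H, 0 ≤ (inner ℂ ((J ∘L W) (B x)) (B x) : ℂ).re) →
      ∀ X₀ : H →L[ℂ] H,
        ((∀ X : H →L[ℂ] H,
            kLE J (kadj J (B ∘L X₀ - C) ∘L (W ∘L (B ∘L X₀ - C)))
              (kadj J (B ∘L X - C) ∘L (W ∘L (B ∘L X - C)))) ↔
          kadj J B ∘L (W ∘L (B ∘L X₀ - C)) = 0)) :=
  stmt7_general J hJ hJ2 W hW B C
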